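/- Let (F_k)_{k∈ℕ} be a sequence in [0,1], let (γ_k) and (a_k) be real sequences, and suppose there are γ̄ ∈ [0,1), k₀ ∈ ℕ, and a real number a such that for all k ≥ k₀: 0 ≤ γ_k ≤ γ̄, F_{k+1} − a_k ≥ γ_k·(F_k − a_k), and a_k → a. Then liminf_{k→∞} F_k ≥ a. -/

import Mathlib

/-!
Fix a level `s` below the limit `aLim` of the fixed points. Eventually `s ≤ a k`, and then the
recursion also contracts toward `s`: `γ k * (F k - s) ≤ F (k + 1) - s`. The negative part of
`F k - s` is therefore multiplied by at most `γbar < 1` at each step, so it decays geometrically,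
and `F` is eventually above every level below `aLim`.
-/

open Filter Topology

theorem mul_sub_le_sub_of_le_of_mul_sub_le {γ x y a t : ℝ} (hγ1 : γ ≤ 1) (hta : t ≤ a)
    (h : γ * (x - a) ≤ y - a) : γ * (x - t) ≤ y - t := by
  nlinarith [mul_nonneg (sub_nonneg.2 hγ1) (sub_nonneg.2 hta)]

section Contraction

variable {d γ : ℕ → ℝ} {c : ℝ} {K : ℕ}

theorem pow_mul_min_zero_le_of_contraction (hγ : ∀ k ≥ K, 0 ≤ γ k ∧ γ k ≤ c)
    (hd : ∀ k ≥ K, γ k * d k ≤ d (k + 1)) (n : ℕ) :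
    c ^ n * min (d K) 0 ≤ min (d (n + K)) 0 := by
  induction n with
  | zero => simp
  | succ n ih =>
    obtain ⟨hγ0, hγc⟩ := hγ (n + K) (Nat.le_add_left K n)
    have hneg : min (d (n + K)) 0 ≤ 0 := min_le_right _ _
    calc c ^ (n + 1) * min (d K) 0 = c * (c ^ n * min (d K) 0) := by ring
      _ ≤ c * min (d (n + K)) 0 := mul_le_mul_of_nonneg_left ih (hγ0.trans hγc)
      _ ≤ γ (n + K) * min (d (n + K)) 0 := mul_le_mul_of_nonpos_right hγc hneg
      _ = min (γ (n + K) * d (n + K)) 0 := by rw [mul_min_of_nonneg _ _ hγ0, mul_zero]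
      _ ≤ min (d (n + 1 + K)) 0 := by
        rw [Nat.add_right_comm]
        exact min_le_min_right _ (hd _ (Nat.le_add_left K n))

theorem tendsto_min_zero_of_contraction (hc : c < 1) (hγ : ∀ k ≥ K, 0 ≤ γ k ∧ γ k ≤ c)
    (hd : ∀ k ≥ K, γ k * d k ≤ d (k + 1)) :
    Tendsto (fun n => min (d n) 0) atTop (𝓝 0) := by
  have hc0 : 0 ≤ c := (hγ K le_rfl).1.trans (hγ K le_rfl).2
  have hpow : Tendsto (fun n => c ^ n * min (d K) 0) atTop (𝓝 0) := by
    simpa using (tendsto_pow_atTop_nhds_zero_of_lt_one hc0 hc).mul_const (min (d K) 0)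
  rw [← tendsto_add_atTop_iff_nat K]
  exact tendsto_of_tendsto_of_tendsto_of_le_of_le hpow tendsto_const_nhds
    (pow_mul_min_zero_le_of_contraction hγ hd) fun n => min_le_right _ _

end Contraction

theorem eventually_le_of_contraction_toward {F γ a : ℕ → ℝ} {γbar aLim t : ℝ} {k₀ : ℕ}
    (hγbar : γbar < 1) (hγ : ∀ k ≥ k₀, 0 ≤ γ k ∧ γ k ≤ γbar)
    (hrec : ∀ k ≥ k₀, γ k * (F k - a k) ≤ F (k + 1) - a k)
    (ha : Tendsto a atTop (𝓝 aLim)) (ht : t < aLim) :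
    ∀ᶠ k in atTop, t ≤ F k := by
  obtain ⟨s, hts, hs⟩ := exists_between ht
  obtain ⟨k₁, hk₁⟩ := eventually_atTop.1 (ha.eventually (eventually_ge_nhds hs))
  have hγ' : ∀ k ≥ max k₀ k₁, 0 ≤ γ k ∧ γ k ≤ γbar := fun k hk => hγ k (le_of_max_le_left hk)
  have hcontr : ∀ k ≥ max k₀ k₁, γ k * (F k - s) ≤ F (k + 1) - s := fun k hk =>
    mul_sub_le_sub_of_le_of_mul_sub_le ((hγ' k hk).2.trans hγbar.le) (hk₁ k (le_of_max_le_right hk))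
      (hrec k (le_of_max_le_left hk))
  have hnegpart := tendsto_min_zero_of_contraction hγbar hγ' hcontr
  filter_upwards [hnegpart.eventually (eventually_gt_nhds (sub_neg.2 hts))] with k hk
  linarith [min_le_left (F k - s) 0]

/-- Quantitative core of Theorem 2 (convergence to a local fixed point): if `F k ∈ [0,1]`,
`0 ≤ γ k ≤ γbar < 1` and `F (k+1) - a k ≥ γ k · (F k - a k)` for all `k ≥ k₀`, and
`a k → aLim`, then `liminf F ≥ aLim`. -/
theorem liminf_ge_of_contraction_toward_limit
    (F γ a : ℕ → ℝ) (hF : ∀ k, F k ∈ Set.Icc (0 : ℝ) 1)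
    (γbar : ℝ) (hγbar : γbar ∈ Set.Ico (0 : ℝ) 1) (k₀ : ℕ) (aLim : ℝ)
    (hγ : ∀ k ≥ k₀, 0 ≤ γ k ∧ γ k ≤ γbar)
    (hrec : ∀ k ≥ k₀, γ k * (F k - a k) ≤ F (k + 1) - a k)
    (ha : Filter.Tendsto a Filter.atTop (nhds aLim)) :
    aLim ≤ Filter.liminf F Filter.atTop := by
  have hcob : IsCoboundedUnder (· ≥ ·) atTop F :=
    (isBoundedUnder_of ⟨1, fun k => (hF k).2⟩).isCoboundedUnder_ge
  exact le_of_forall_lt_imp_le_of_dense fun t ht =>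
    le_liminf_of_le hcob (eventually_le_of_contraction_toward hγbar.2 hγ hrec ha ht)
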